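/- Let G be a topological group admitting a functorial embedding j : [0,1] → G, and let ℐ be a usual Cantor scheme with J_∅ = [0,1]. Then for every n ∈ ℕ, the map z_n : [0,1] → G (sending 0 to the identity and ξ > 0 to the alternating product of endpoints of ℐ_{n,ξ}) is a topological embedding. -/

import Mathlib

open Set Topology Filter

/-- A usual Cantor scheme, given by the endpoint functions of the intervals
`J_s = [a s, b s]`, indexed by finite binary sequences (lists of booleans),
where `s ++ [false]` is `s⌢0` and `s ++ [true]` is `s⌢1`. -/
structure CantorScheme where
  a : List Bool → ℝ
  b : List Bool → ℝ
  left_min : ∀ s, a (s ++ [false]) = a s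
  right_max : ∀ s, b (s ++ [true]) = b s
  lt1 : ∀ s, a (s ++ [false]) < b (s ++ [false])
  lt2 : ∀ s, b (s ++ [false]) < a (s ++ [true])
  lt3 : ∀ s, a (s ++ [true]) < b (s ++ [true])
  diam_tendsto : ∀ f : ℕ → Bool,
    Filter.Tendsto (fun n => b (List.ofFn fun i : Fin n => f i) - a (List.ofFn fun i : Fin n => f i))
      Filter.atTop (nhds 0)

/-- For `ξ ∈ (0,1]`, the unique `k` with `3^{-(k+1)} < ξ ≤ 3^{-k}`. -/
noncomputable def scaleIndex (ξ : ℝ) : ℕ := ⌊-Real.logb 3 ξ⌋₊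

/-- The piecewise linear map `left_s : [0,1] → J_s` with `left_s 0 = min J_s`,
`left_s (1/3^k) = max J_{s⌢0^{k+1}}`, linear on each `[1/3^{k+1}, 1/3^k]`. -/
noncomputable def CantorScheme.leftMap (C : CantorScheme) (s : List Bool) (ξ : ℝ) : ℝ :=
  if ξ ≤ 0 then C.a s
  else
    let k := scaleIndex ξ
    let x0 : ℝ := (3:ℝ)⁻¹ ^ (k + 1)
    let x1 : ℝ := (3:ℝ)⁻¹ ^ k
    let y0 := C.b (s ++ List.replicate (k + 2) false)
    let y1 := C.b (s ++ List.replicate (k + 1) false)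
    y0 + (ξ - x0) / (x1 - x0) * (y1 - y0)

/-- The piecewise linear map `right_s : [0,1] → J_s` with `right_s 0 = max J_s`,
`right_s (1/3^k) = min J_{s⌢1^{k+1}}`, linear on each `[1/3^{k+1}, 1/3^k]`. -/
noncomputable def CantorScheme.rightMap (C : CantorScheme) (s : List Bool) (ξ : ℝ) : ℝ :=
  if ξ ≤ 0 then C.b s
  else
    let k := scaleIndex ξ
    let x0 : ℝ := (3:ℝ)⁻¹ ^ (k + 1)
    let x1 : ℝ := (3:ℝ)⁻¹ ^ k
    let y0 := C.a (s ++ List.replicate (k + 2) true)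
    let y1 := C.a (s ++ List.replicate (k + 1) true)
    y0 + (ξ - x0) / (x1 - x0) * (y1 - y0)

/-- The set `∂ℐ_{n,ξ}` of endpoints of the intervals
`left_s([0,ξ]) = [min J_s, left_s ξ]` and `right_s([0,ξ]) = [right_s ξ, max J_s]`,
for `s` ranging over binary sequences of length `n`. -/
noncomputable def CantorScheme.boundary (C : CantorScheme) (n : ℕ) (ξ : ℝ) : Finset ℝ :=
  Finset.image
    (fun p : (Fin n → Bool) × Fin 4 =>
      ![C.a (List.ofFn p.1), C.leftMap (List.ofFn p.1) ξ,
        C.rightMap (List.ofFn p.1) ξ, C.b (List.ofFn p.1)] p.2)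
    Finset.univ

/-- Alternating product `j x₁^{±1} j x₂^{∓1} ⋯` along a list, starting with the sign
given by the boolean (`false` = inverse first). -/
def altProd {G : Type*} [Group G] (j : ℝ → G) : Bool → List ℝ → G
  | _, [] => 1
  | sgn, x :: l => (if sgn then j x else (j x)⁻¹) * altProd j (!sgn) l

/-- `π₋(X) = j x₁⁻¹ · j x₂ · j x₃⁻¹ ⋯` where `x₁ < x₂ < ⋯` enumerates the finite set `X`. -/
noncomputable def piMinus {G : Type*} [Group G] (j : ℝ → G) (X : Finset ℝ) : G :=
  altProd j false (X.sort (· ≤ ·))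

/-- The map `z_n : [0,1] → G`, `z_n 0 = e`, `z_n ξ = π₋(∂ℐ_{n,ξ})` for `ξ > 0`. -/
noncomputable def CantorScheme.z {G : Type*} [Group G] (C : CantorScheme) (j : ℝ → G)
    (n : ℕ) (ξ : ℝ) : G :=
  if ξ ≤ 0 then 1 else piMinus j (C.boundary n ξ)

/-- `j` is a functorial embedding of `[0,1]` into the topological group `G`:
a topological embedding of `[0,1]` such that every autohomeomorphism `h` of `[0,1]`
extends to a continuous group homomorphism `H : G → G` with `H ∘ j = j ∘ h`. -/
def FunctorialEmbedding {G : Type*} [Group G] [TopologicalSpace G] (j : ℝ → G) : Prop :=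
  Topology.IsEmbedding ((Set.Icc (0:ℝ) 1).restrict j) ∧
  ∀ h : Set.Icc (0:ℝ) 1 ≃ₜ Set.Icc (0:ℝ) 1,
    ∃ H : G →* G, Continuous H ∧ ∀ x : Set.Icc (0:ℝ) 1, H (j x) = j (h x)


/-!
Sorting the endpoints of `ℐ_{n,ξ}` interval by interval writes `z_n ξ` as the product, over the
binary words `s` of length `n` from left to right, of
`j(min J_s)⁻¹ j(left_s ξ) j(right_s ξ)⁻¹ j(max J_s)`. Since `left_s` and `right_s` are continuous,
so is `z_n`; as `[0,1]` is compact and the topological group `G` is R₁, it remains to see that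
`z_n ξ` and `z_n η` are inseparable only if `ξ = η`.

For `ξ < η` put `p = left_{0^n} ξ < q = left_{0^n} η` and `D = min J_{0^n⌢1}`. A homeomorphism `h`
of `[0,1]` supported on `(p, D)` fixes every letter of `z_n ξ` and moves only the letter `q` of
`z_n η`, so its extension `H` fixes `z_n ξ` and sends `z_n η` to
`j(0)⁻¹ j(h q) j(q)⁻¹ j(0) z_n η`. Inseparability of `z_n ξ` and `z_n η` would then make `j(h q)`
and `j(q)` inseparable, contradicting `h q ≠ q` since `j` is an embedding.
-/

theorem MonotoneOn.continuousOn_of_surjOn_Icc {f : ℝ → ℝ} {a b c d : ℝ}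
    (hmono : MonotoneOn f (Icc a b)) (hmaps : MapsTo f (Icc a b) (Icc c d))
    (hsurj : SurjOn f (Icc a b) (Icc c d)) : ContinuousOn f (Icc a b) := by
  rw [continuousOn_iff_continuous_domRestrict]
  refine continuous_subtype_val.comp (f := hmaps.restrict) (Monotone.continuous_of_surjective
    (fun x y hxy => hmono x.2 y.2 hxy) fun v => ?_)
  obtain ⟨x, hx, hfx⟩ := hsurj v.2
  exact ⟨⟨x, hx⟩, Subtype.ext hfx⟩

theorem exists_mem_Ioc_of_tendsto {y : ℕ → ℝ} {L v : ℝ} (hL : Tendsto y atTop (𝓝 L))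
    (hv : L < v) (h0 : v ≤ y 0) : ∃ k, v ∈ Ioc (y (k + 1)) (y k) := by
  classical
  have hex : ∃ k, y k < v := (hL.eventually (gt_mem_nhds hv)).exists
  cases hk : Nat.find hex with
  | zero => exact absurd h0 (not_le.mpr (hk ▸ Nat.find_spec hex))
  | succ k => exact ⟨k, hk ▸ Nat.find_spec hex, not_lt.mp (Nat.find_min hex (by omega))⟩

theorem exists_homeomorph_unitInterval {f : ℝ → ℝ} (hf : ContinuousOn f (Icc 0 1))
    (hmono : StrictMonoOn f (Icc 0 1)) (h0 : f 0 = 0) (h1 : f 1 = 1) :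
    ∃ h : Icc (0:ℝ) 1 ≃ₜ Icc (0:ℝ) 1, ∀ x, (h x : ℝ) = f x := by
  have hmaps : MapsTo f (Icc 0 1) (Icc 0 1) := fun x hx =>
    ⟨h0 ▸ hmono.monotoneOn ⟨le_rfl, zero_le_one⟩ hx hx.1,
      h1 ▸ hmono.monotoneOn hx ⟨zero_le_one, le_rfl⟩ hx.2⟩
  have hivt := intermediate_value_Icc zero_le_one hf
  rw [h0, h1] at hivt
  have hsurj : Function.Surjective hmaps.restrict := fun y => by
    obtain ⟨x, hx, hfx⟩ := hivt y.2
    exact ⟨⟨x, hx⟩, Subtype.ext hfx⟩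
  exact ⟨(StrictMono.orderIsoOfSurjective hmaps.restrict (fun x y hxy => hmono x.2 y.2 hxy)
    hsurj).toHomeomorph, fun _ => rfl⟩

/-- A homeomorphism of `ℝ` that moves exactly the points of `(a, b)`. -/
noncomputable def bump (a b x : ℝ) : ℝ := x + max 0 (min (x - a) (b - x)) / 2

section Bump

variable {a b x : ℝ}

theorem continuous_bump (a b : ℝ) : Continuous (bump a b) := by
  unfold bump
  fun_prop

theorem strictMono_bump (a b : ℝ) : StrictMono (bump a b) := by
  intro x y hxy
  have hmin : min (x - a) (b - x) ≤ min (y - a) (b - y) + (y - x) := by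
    rw [← min_add_add_right]
    exact min_le_min (by linarith) (by linarith)
  have : max 0 (min (x - a) (b - x)) ≤ max 0 (min (y - a) (b - y)) + (y - x) :=
    max_le (by linarith [le_max_left 0 (min (y - a) (b - y))])
      (by linarith [le_max_right 0 (min (y - a) (b - y))])
  unfold bump
  linarith

theorem bump_of_le (hx : x ≤ a) : bump a b x = x := by
  simp [bump, show x - a ≤ 0 by linarith]

theorem bump_of_ge (hx : b ≤ x) : bump a b x = x := by
  simp [bump, show b - x ≤ 0 by linarith]

theorem lt_bump (ha : a < x) (hb : x < b) : x < bump a b x := by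
  have : 0 < min (x - a) (b - x) := lt_min (by linarith) (by linarith)
  simp only [bump, max_eq_right this.le]
  linarith

end Bump

theorem Topology.IsEmbedding.of_continuous_of_inseparable {X Y : Type*} [TopologicalSpace X]
    [CompactSpace X] [TopologicalSpace Y] [R1Space Y] {f : X → Y} (hf : Continuous f)
    (hinj : ∀ x y, Inseparable (f x) (f y) → x = y) : IsEmbedding f :=
  IsEmbedding.of_comp hf SeparationQuotient.continuous_mk
    ((SeparationQuotient.continuous_mk.comp hf).isClosedEmbedding
      fun x y hxy => hinj x y (SeparationQuotient.mk_eq_mk.mp hxy)).isEmbedding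

theorem Topology.IsEmbedding.eq_of_inseparable_domRestrict {X Y : Type*} [TopologicalSpace X]
    [T0Space X] [TopologicalSpace Y] {s : Set X} {f : X → Y} (hf : IsEmbedding (s.domRestrict f))
    {x y : X} (hx : x ∈ s) (hy : y ∈ s) (h : Inseparable (f x) (f y)) : x = y :=
  congrArg Subtype.val ((hf.isInducing.inseparable_iff (x := (⟨x, hx⟩ : s)) (y := ⟨y, hy⟩)).mp h).eq

theorem inv_three_pow_eq_rpow (k : ℕ) : (3:ℝ)⁻¹ ^ k = (3:ℝ) ^ (-(k:ℝ)) := by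
  rw [Real.rpow_neg (by norm_num), Real.rpow_natCast, inv_pow]

theorem inv_three_pow_succ_lt (k : ℕ) : (3:ℝ)⁻¹ ^ (k + 1) < (3:ℝ)⁻¹ ^ k :=
  pow_lt_pow_right_of_lt_one₀ (by norm_num) (by norm_num) (Nat.lt_succ_self k)

theorem scaleIndex_spec {ξ : ℝ} (h0 : 0 < ξ) (h1 : ξ ≤ 1) :
    (3:ℝ)⁻¹ ^ (scaleIndex ξ + 1) < ξ ∧ ξ ≤ (3:ℝ)⁻¹ ^ scaleIndex ξ := by
  have hlog : 0 ≤ -Real.logb 3 ξ := neg_nonneg.mpr (Real.logb_nonpos (by norm_num) h0.le h1)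
  have hξ : (3:ℝ) ^ Real.logb 3 ξ = ξ := Real.rpow_logb (by norm_num) (by norm_num) h0
  have hk₁ : (scaleIndex ξ : ℝ) ≤ -Real.logb 3 ξ := Nat.floor_le hlog
  have hk₂ : -Real.logb 3 ξ < scaleIndex ξ + 1 := Nat.lt_floor_add_one _
  rw [inv_three_pow_eq_rpow, inv_three_pow_eq_rpow]
  constructor
  · calc (3:ℝ) ^ (-((scaleIndex ξ + 1 : ℕ) : ℝ)) < 3 ^ Real.logb 3 ξ := by
          apply (Real.rpow_lt_rpow_left_iff (by norm_num)).mpr; push_cast; linarith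
      _ = ξ := hξ
  · calc ξ = (3:ℝ) ^ Real.logb 3 ξ := hξ.symm
      _ ≤ (3:ℝ) ^ (-(scaleIndex ξ : ℝ)) := by
          apply (Real.rpow_le_rpow_left_iff (by norm_num)).mpr; linarith

theorem scaleIndex_eq {k : ℕ} {ξ : ℝ} (hl : (3:ℝ)⁻¹ ^ (k + 1) < ξ) (hu : ξ ≤ (3:ℝ)⁻¹ ^ k) :
    scaleIndex ξ = k := by
  have hξ : 0 < ξ := lt_trans (by positivity) hl
  have hlog : ∀ m : ℕ, Real.logb 3 ((3:ℝ)⁻¹ ^ m) = -(m:ℝ) := fun m => by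
    rw [inv_three_pow_eq_rpow, Real.logb_rpow (by norm_num) (by norm_num)]
  have h₁ : Real.logb 3 ξ ≤ -(k:ℝ) :=
    hlog k ▸ (Real.logb_le_logb (by norm_num) hξ (by positivity)).mpr hu
  have h₂ : -((k:ℝ) + 1) < Real.logb 3 ξ := by
    have := Real.logb_lt_logb (by norm_num : (1:ℝ) < 3) (by positivity) hl
    rw [hlog (k + 1)] at this
    push_cast at this
    linarith
  rw [scaleIndex, Nat.floor_eq_iff (by linarith)]
  constructor <;> linarith

theorem scaleIndex_le_of_le {ξ η : ℝ} (hξ : 0 < ξ) (hξη : ξ ≤ η) (hη : η ≤ 1) :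
    scaleIndex η ≤ scaleIndex ξ := by
  by_contra! h
  have := pow_le_pow_of_le_one (by norm_num : (0:ℝ) ≤ 3⁻¹) (by norm_num)
    (by omega : scaleIndex ξ + 1 ≤ scaleIndex η)
  linarith [scaleIndex_spec hξ (hξη.trans hη), scaleIndex_spec (hξ.trans_le hξη) hη]

noncomputable def scaleFrac (ξ : ℝ) : ℝ :=
  (ξ - (3:ℝ)⁻¹ ^ (scaleIndex ξ + 1)) / ((3:ℝ)⁻¹ ^ scaleIndex ξ - (3:ℝ)⁻¹ ^ (scaleIndex ξ + 1))

theorem scaleFrac_mem_Ioc {ξ : ℝ} (h0 : 0 < ξ) (h1 : ξ ≤ 1) : scaleFrac ξ ∈ Ioc 0 1 := by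
  obtain ⟨hl, hu⟩ := scaleIndex_spec h0 h1
  have := inv_three_pow_succ_lt (scaleIndex ξ)
  exact ⟨div_pos (by linarith) (by linarith), (div_le_one (by linarith)).mpr (by linarith)⟩

theorem scaleFrac_lt_scaleFrac {ξ η : ℝ} (hk : scaleIndex ξ = scaleIndex η) (hξη : ξ < η) :
    scaleFrac ξ < scaleFrac η := by
  rw [scaleFrac, scaleFrac, hk]
  exact div_lt_div_of_pos_right (by linarith) (by linarith [inv_three_pow_succ_lt (scaleIndex η)])

theorem exists_scaleIndex_eq_scaleFrac_eq (k : ℕ) {t : ℝ} (ht : t ∈ Ioc 0 1) :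
    ∃ ξ ∈ Ioc (0:ℝ) 1, scaleIndex ξ = k ∧ scaleFrac ξ = t := by
  have hgap := inv_three_pow_succ_lt k
  set ξ := (3:ℝ)⁻¹ ^ (k + 1) + t * ((3:ℝ)⁻¹ ^ k - (3:ℝ)⁻¹ ^ (k + 1))
  have hl : (3:ℝ)⁻¹ ^ (k + 1) < ξ := lt_add_of_pos_right _ (mul_pos ht.1 (by linarith))
  have hu : ξ ≤ (3:ℝ)⁻¹ ^ k := by
    have := mul_le_of_le_one_left (by linarith : (0:ℝ) ≤ (3:ℝ)⁻¹ ^ k - (3:ℝ)⁻¹ ^ (k + 1)) ht.2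
    simp only [ξ]
    linarith
  have hk := scaleIndex_eq hl hu
  refine ⟨ξ, ⟨lt_trans (by positivity) hl, hu.trans (pow_le_one₀ (by norm_num) (by norm_num))⟩,
    hk, ?_⟩
  rw [scaleFrac, hk, add_sub_cancel_left, mul_div_cancel_right₀ _ (by linarith)]

/-- The piecewise linear map with value `L` at `0` and `y (k + 1)` at `3^{-k}`: both
`leftMap s` and `rightMap s` are of this form. -/
noncomputable def ladder (y : ℕ → ℝ) (L ξ : ℝ) : ℝ :=
  if ξ ≤ 0 then L
  else y (scaleIndex ξ + 2) + scaleFrac ξ * (y (scaleIndex ξ + 1) - y (scaleIndex ξ + 2))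

section Ladder

variable {y : ℕ → ℝ} {L ξ : ℝ}

theorem ladder_of_nonpos (h : ξ ≤ 0) : ladder y L ξ = L := if_pos h

theorem ladder_of_pos (h : 0 < ξ) : ladder y L ξ =
    y (scaleIndex ξ + 2) + scaleFrac ξ * (y (scaleIndex ξ + 1) - y (scaleIndex ξ + 2)) :=
  if_neg h.not_ge

theorem ladder_neg (y : ℕ → ℝ) (L ξ : ℝ) : ladder (-y) (-L) ξ = -ladder y L ξ := by
  unfold ladder
  split_ifs
  · rfl
  · simp only [Pi.neg_apply]
    ring

theorem ladder_mem_Ioc (hy : StrictAnti y) (h0 : 0 < ξ) (h1 : ξ ≤ 1) :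
    ladder y L ξ ∈ Ioc (y (scaleIndex ξ + 2)) (y (scaleIndex ξ + 1)) := by
  obtain ⟨ht0, ht1⟩ := scaleFrac_mem_Ioc h0 h1
  have hgap := hy (Nat.lt_succ_self (scaleIndex ξ + 1))
  rw [ladder_of_pos h0]
  constructor <;> nlinarith

variable (hy : StrictAnti y) (hL : Tendsto y atTop (𝓝 L))
include hy hL

theorem StrictAnti.lt_of_tendsto (k : ℕ) : L < y k :=
  (hy.antitone.le_of_tendsto hL (k + 1)).trans_lt (hy (Nat.lt_succ_self k))

theorem lt_ladder (h0 : 0 < ξ) (h1 : ξ ≤ 1) : L < ladder y L ξ :=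
  (hy.lt_of_tendsto hL _).trans (ladder_mem_Ioc hy h0 h1).1

theorem mapsTo_ladder : MapsTo (ladder y L) (Icc 0 1) (Icc L (y 1)) := by
  rintro ξ ⟨h0, h1⟩
  rcases h0.eq_or_lt with rfl | h0
  · rw [ladder_of_nonpos le_rfl]
    exact ⟨le_rfl, (hy.lt_of_tendsto hL 1).le⟩
  · exact ⟨(lt_ladder hy hL h0 h1).le,
      (ladder_mem_Ioc hy h0 h1).2.trans (hy.antitone (Nat.le_add_left 1 _))⟩

theorem strictMonoOn_ladder : StrictMonoOn (ladder y L) (Icc 0 1) := by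
  rintro ξ ⟨hξ0, -⟩ η ⟨-, hη1⟩ hξη
  have hη0 := hξ0.trans_lt hξη
  rcases hξ0.eq_or_lt with rfl | hξ0
  · rw [ladder_of_nonpos le_rfl]
    exact lt_ladder hy hL hη0 hη1
  have hξ1 := hξη.le.trans hη1
  rcases (scaleIndex_le_of_le hξ0 hξη.le hη1).eq_or_lt with hk | hk
  · have hfrac := scaleFrac_lt_scaleFrac hk.symm hξη
    have hgap : y (scaleIndex ξ + 2) < y (scaleIndex ξ + 1) := hy (Nat.lt_succ_self _)
    rw [ladder_of_pos hξ0, ladder_of_pos hη0, hk]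
    nlinarith
  · calc ladder y L ξ ≤ y (scaleIndex ξ + 1) := (ladder_mem_Ioc hy hξ0 hξ1).2
      _ ≤ y (scaleIndex η + 2) := hy.antitone (by omega)
      _ < ladder y L η := (ladder_mem_Ioc hy hη0 hη1).1

theorem surjOn_ladder : SurjOn (ladder y L) (Icc 0 1) (Icc L (y 1)) := by
  rintro v ⟨hLv, hv1⟩
  rcases hLv.eq_or_lt with rfl | hLv
  · exact ⟨0, ⟨le_rfl, zero_le_one⟩, ladder_of_nonpos le_rfl⟩
  obtain ⟨k, hk⟩ := exists_mem_Ioc_of_tendsto ((tendsto_add_atTop_iff_nat 1).mpr hL) hLv hv1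
  have hgap : y (k + 2) < y (k + 1) := hy (Nat.lt_succ_self _)
  obtain ⟨ξ, ⟨hξ0, hξ1⟩, hkξ, hfrac⟩ := exists_scaleIndex_eq_scaleFrac_eq k
    (t := (v - y (k + 2)) / (y (k + 1) - y (k + 2)))
    ⟨div_pos (by linarith [hk.1]) (by linarith),
      (div_le_one (by linarith)).mpr (by linarith [hk.2])⟩
  refine ⟨ξ, ⟨hξ0.le, hξ1⟩, ?_⟩
  rw [ladder_of_pos hξ0, hfrac, hkξ, div_mul_cancel₀ _ (by linarith)]
  ring

theorem continuousOn_ladder : ContinuousOn (ladder y L) (Icc 0 1) :=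
  (strictMonoOn_ladder hy hL).monotoneOn.continuousOn_of_surjOn_Icc (mapsTo_ladder hy hL)
    (surjOn_ladder hy hL)

end Ladder

/-- The binary words of length `n`, listed in the left-to-right order of the intervals `J_s`. -/
def binaryWords : ℕ → List (List Bool)
  | 0 => [[]]
  | n + 1 => (binaryWords n).map (List.cons false) ++ (binaryWords n).map (List.cons true)

theorem mem_binaryWords {n : ℕ} {s : List Bool} : s ∈ binaryWords n ↔ s.length = n := by
  induction n generalizing s with
  | zero => simp [binaryWords, List.length_eq_zero_iff]
  | succ n ih =>
    cases s with
    | nil => simp [binaryWords]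
    | cons i s => cases i <;> simp [binaryWords, ih]

theorem binaryWords_eq_cons (n : ℕ) : ∃ r, binaryWords n = List.replicate n false :: r := by
  induction n with
  | zero => exact ⟨[], rfl⟩
  | succ n ih =>
    obtain ⟨r, hr⟩ := ih
    refine ⟨r.map (List.cons false) ++ (binaryWords n).map (List.cons true), ?_⟩
    rw [binaryWords, List.replicate_succ]
    nth_rewrite 1 [hr]
    rfl

namespace CantorScheme

section

variable (C : CantorScheme)

theorem a_lt_a_append_true (s : List Bool) : C.a s < C.a (s ++ [true]) :=
  calc C.a s = C.a (s ++ [false]) := (C.left_min s).symm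
    _ < C.b (s ++ [false]) := C.lt1 s
    _ < C.a (s ++ [true]) := C.lt2 s

theorem b_append_false_lt (s : List Bool) : C.b (s ++ [false]) < C.b s :=
  calc C.b (s ++ [false]) < C.a (s ++ [true]) := C.lt2 s
    _ < C.b (s ++ [true]) := C.lt3 s
    _ = C.b s := C.right_max s

theorem a_le_a_append (s t : List Bool) : C.a s ≤ C.a (s ++ t) := by
  induction t using List.reverseRecOn with
  | nil => simp
  | append_singleton t i ih =>
    rw [← List.append_assoc]
    refine ih.trans ?_
    cases i
    · exact (C.left_min _).ge
    · exact (C.a_lt_a_append_true _).le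

theorem b_append_le (s t : List Bool) : C.b (s ++ t) ≤ C.b s := by
  induction t using List.reverseRecOn with
  | nil => simp
  | append_singleton t i ih =>
    rw [← List.append_assoc]
    refine le_trans ?_ ih
    cases i
    · exact (C.b_append_false_lt _).le
    · exact (C.right_max _).le

theorem a_lt_b (s : List Bool) : C.a s < C.b s :=
  calc C.a s = C.a (s ++ [false]) := (C.left_min s).symm
    _ < C.b (s ++ [false]) := C.lt1 s
    _ ≤ C.b s := C.b_append_le s _

theorem a_nonneg (h0 : C.a [] = 0) (s : List Bool) : 0 ≤ C.a s :=
  h0 ▸ C.a_le_a_append [] s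

theorem b_le_one (h1 : C.b [] = 1) (s : List Bool) : C.b s ≤ 1 :=
  h1 ▸ C.b_append_le [] s

theorem a_append_replicate_false (s : List Bool) (k : ℕ) :
    C.a (s ++ List.replicate k false) = C.a s := by
  induction k with
  | zero => simp
  | succ k ih => rw [List.replicate_succ', ← List.append_assoc, C.left_min, ih]

theorem b_append_replicate_true (s : List Bool) (k : ℕ) :
    C.b (s ++ List.replicate k true) = C.b s := by
  induction k with
  | zero => simp
  | succ k ih => rw [List.replicate_succ', ← List.append_assoc, C.right_max, ih]

theorem strictAnti_b_append_replicate_false (s : List Bool) :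
    StrictAnti fun k => C.b (s ++ List.replicate k false) :=
  strictAnti_nat_of_succ_lt fun k => by
    simpa only [List.replicate_succ', ← List.append_assoc] using C.b_append_false_lt _

theorem strictMono_a_append_replicate_true (s : List Bool) :
    StrictMono fun k => C.a (s ++ List.replicate k true) :=
  strictMono_nat_of_lt_succ fun k => by
    simpa only [List.replicate_succ', ← List.append_assoc] using C.a_lt_a_append_true _

theorem tendsto_diam_append_replicate (s : List Bool) (i : Bool) :
    Tendsto (fun k => C.b (s ++ List.replicate k i) - C.a (s ++ List.replicate k i))
      atTop (𝓝 0) := by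
  have hword : ∀ k, (List.ofFn fun m : Fin (k + s.length) => s.getD m i) =
      s ++ List.replicate k i := fun k => by
    refine List.ext_getElem (by simp [add_comm]) fun m h₁ h₂ => ?_
    simp only [List.getElem_ofFn, List.getElem_append, List.getD_eq_getElem?_getD]
    split_ifs with hm
    · simp [hm]
    · simp [List.getElem?_eq_none (not_lt.mp hm)]
  simpa only [Function.comp_def, hword] using
    (C.diam_tendsto fun m => s.getD m i).comp (tendsto_add_atTop_nat s.length)

theorem tendsto_b_append_replicate_false (s : List Bool) :
    Tendsto (fun k => C.b (s ++ List.replicate k false)) atTop (𝓝 (C.a s)) := by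
  simpa [C.a_append_replicate_false] using
    (C.tendsto_diam_append_replicate s false).add_const (C.a s)

theorem tendsto_a_append_replicate_true (s : List Bool) :
    Tendsto (fun k => C.a (s ++ List.replicate k true)) atTop (𝓝 (C.b s)) := by
  simpa [C.b_append_replicate_true] using
    ((C.tendsto_diam_append_replicate s true).const_sub (C.b s))

end

section

variable (C : CantorScheme) (s : List Bool) {ξ : ℝ}

theorem leftMap_eq_ladder :
    C.leftMap s = ladder (fun k => C.b (s ++ List.replicate k false)) (C.a s) := rfl

theorem rightMap_eq_neg_ladder :
    C.rightMap s = fun ξ => -ladder (fun k => -C.a (s ++ List.replicate k true)) (-C.b s) ξ := by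
  funext ξ
  rw [← ladder_neg]
  simp only [Pi.neg_def, neg_neg]
  rfl

theorem leftMap_of_nonpos (h : ξ ≤ 0) : C.leftMap s ξ = C.a s := if_pos h

theorem rightMap_of_nonpos (h : ξ ≤ 0) : C.rightMap s ξ = C.b s := if_pos h

theorem leftMap_mem_Icc (hξ : ξ ∈ Icc 0 1) : C.leftMap s ξ ∈ Icc (C.a s) (C.b (s ++ [false])) :=
  C.leftMap_eq_ladder s ▸ mapsTo_ladder (C.strictAnti_b_append_replicate_false s)
    (C.tendsto_b_append_replicate_false s) hξ

theorem a_lt_leftMap (h0 : 0 < ξ) (h1 : ξ ≤ 1) : C.a s < C.leftMap s ξ :=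
  C.leftMap_eq_ladder s ▸ lt_ladder (C.strictAnti_b_append_replicate_false s)
    (C.tendsto_b_append_replicate_false s) h0 h1

theorem strictMonoOn_leftMap : StrictMonoOn (C.leftMap s) (Icc 0 1) :=
  C.leftMap_eq_ladder s ▸ strictMonoOn_ladder (C.strictAnti_b_append_replicate_false s)
    (C.tendsto_b_append_replicate_false s)

theorem continuousOn_leftMap : ContinuousOn (C.leftMap s) (Icc 0 1) :=
  C.leftMap_eq_ladder s ▸ continuousOn_ladder (C.strictAnti_b_append_replicate_false s)
    (C.tendsto_b_append_replicate_false s)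

theorem rightMap_mem_Icc (hξ : ξ ∈ Icc 0 1) : C.rightMap s ξ ∈ Icc (C.a (s ++ [true])) (C.b s) := by
  have := mapsTo_ladder (C.strictMono_a_append_replicate_true s).neg
    (C.tendsto_a_append_replicate_true s).neg hξ
  rw [C.rightMap_eq_neg_ladder]
  exact ⟨le_neg.mpr this.2, neg_le.mpr this.1⟩

theorem rightMap_lt_b (h0 : 0 < ξ) (h1 : ξ ≤ 1) : C.rightMap s ξ < C.b s := by
  rw [C.rightMap_eq_neg_ladder]
  exact neg_lt.mpr (lt_ladder (C.strictMono_a_append_replicate_true s).neg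
    (C.tendsto_a_append_replicate_true s).neg h0 h1)

theorem continuousOn_rightMap : ContinuousOn (C.rightMap s) (Icc 0 1) := by
  rw [C.rightMap_eq_neg_ladder]
  exact (continuousOn_ladder (C.strictMono_a_append_replicate_true s).neg
    (C.tendsto_a_append_replicate_true s).neg).neg

end

section

variable (C : CantorScheme)

theorem pairwise_b_lt_a_binaryWords (n : ℕ) (u : List Bool) :
    (binaryWords n).Pairwise fun s t => C.b (u ++ s) < C.a (u ++ t) := by
  induction n generalizing u with
  | zero => simp [binaryWords]
  | succ n ih =>
    simp only [binaryWords, List.pairwise_append, List.pairwise_map, List.mem_map]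
    refine ⟨by simpa using ih (u ++ [false]), by simpa using ih (u ++ [true]), ?_⟩
    rintro _ ⟨s, -, rfl⟩ _ ⟨t, -, rfl⟩
    rw [← List.singleton_append, ← List.append_assoc, ← List.singleton_append (l := t),
      ← List.append_assoc]
    calc C.b ((u ++ [false]) ++ s) ≤ C.b (u ++ [false]) := C.b_append_le _ _
      _ < C.a (u ++ [true]) := C.lt2 u
      _ ≤ C.a ((u ++ [true]) ++ t) := C.a_le_a_append _ _

/-- The endpoints of the two intervals of `ℐ_{n,ξ}` inside `J_s`, in increasing order. -/
noncomputable def blockPoints (ξ : ℝ) (s : List Bool) : List ℝ :=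
  [C.a s, C.leftMap s ξ, C.rightMap s ξ, C.b s]

noncomputable def boundaryList (n : ℕ) (ξ : ℝ) : List ℝ :=
  ((binaryWords n).map (C.blockPoints ξ)).flatten

variable {C} {ξ : ℝ} {s : List Bool}

theorem mem_Icc_of_mem_blockPoints (hξ : ξ ∈ Icc 0 1) {x : ℝ} (hx : x ∈ C.blockPoints ξ s) :
    x ∈ Icc (C.a s) (C.b s) := by
  have hl := C.leftMap_mem_Icc s hξ
  have hr := C.rightMap_mem_Icc s hξ
  have hsplit := (C.lt2 s).le
  have hab := (C.a_lt_b s).le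
  simp only [blockPoints, List.mem_cons, List.not_mem_nil, or_false] at hx
  rcases hx with rfl | rfl | rfl | rfl
  · exact ⟨le_rfl, hab⟩
  · exact ⟨hl.1, hl.2.trans (hsplit.trans (hr.1.trans hr.2))⟩
  · exact ⟨hl.1.trans (hl.2.trans (hsplit.trans hr.1)), hr.2⟩
  · exact ⟨hab, le_rfl⟩

theorem pairwise_lt_blockPoints (h0 : 0 < ξ) (h1 : ξ ≤ 1) :
    (C.blockPoints ξ s).Pairwise (· < ·) := by
  have hl := C.leftMap_mem_Icc s ⟨h0.le, h1⟩
  have hr := C.rightMap_mem_Icc s ⟨h0.le, h1⟩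
  rw [blockPoints, ← List.isChain_iff_pairwise]
  simp only [List.isChain_cons_cons, List.isChain_singleton, and_true]
  exact ⟨C.a_lt_leftMap s h0 h1, hl.2.trans_lt ((C.lt2 s).trans_le hr.1),
    C.rightMap_lt_b s h0 h1⟩

theorem pairwise_lt_boundaryList (n : ℕ) (h0 : 0 < ξ) (h1 : ξ ≤ 1) :
    (C.boundaryList n ξ).Pairwise (· < ·) := by
  rw [boundaryList, List.pairwise_flatten, List.pairwise_map]
  have hcross : (binaryWords n).Pairwise fun s t => C.b s < C.a t := by
    simpa using C.pairwise_b_lt_a_binaryWords n []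
  refine ⟨fun l hl => ?_, hcross.imp ?_⟩
  · obtain ⟨s, -, rfl⟩ := List.mem_map.mp hl
    exact pairwise_lt_blockPoints h0 h1
  · intro s t hst x hx y hy
    exact ((mem_Icc_of_mem_blockPoints ⟨h0.le, h1⟩ hx).2.trans_lt hst).trans_le
      (mem_Icc_of_mem_blockPoints ⟨h0.le, h1⟩ hy).1

theorem boundary_eq_toFinset (n : ℕ) (ξ : ℝ) :
    C.boundary n ξ = (C.boundaryList n ξ).toFinset := by
  ext x
  simp only [boundary, boundaryList, blockPoints, Finset.mem_image, Finset.mem_univ, true_and,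
    List.mem_toFinset, List.mem_flatten, List.mem_map, Prod.exists]
  constructor
  · rintro ⟨v, i, rfl⟩
    refine ⟨_, ⟨List.ofFn v, mem_binaryWords.mpr (List.length_ofFn), rfl⟩, ?_⟩
    fin_cases i <;> simp
  · rintro ⟨_, ⟨s, hs, rfl⟩, hx⟩
    obtain rfl := mem_binaryWords.mp hs
    obtain ⟨v, hv⟩ : ∃ v : Fin s.length → Bool, List.ofFn v = s := ⟨_, List.ofFn_getElem⟩
    rw [← hv] at hx
    simp only [List.mem_cons, List.not_mem_nil, or_false] at hx
    rcases hx with hx | hx | hx | hx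
    exacts [⟨_, 0, hx.symm⟩, ⟨_, 1, hx.symm⟩, ⟨_, 2, hx.symm⟩, ⟨_, 3, hx.symm⟩]

theorem sort_boundary (n : ℕ) (h0 : 0 < ξ) (h1 : ξ ≤ 1) :
    (C.boundary n ξ).sort (· ≤ ·) = C.boundaryList n ξ := by
  have hlt := pairwise_lt_boundaryList (C := C) n h0 h1
  rw [boundary_eq_toFinset, List.toFinset_sort _ (hlt.imp ne_of_lt)]
  exact hlt.imp le_of_lt

end

section

variable {G : Type*} [Group G] (C : CantorScheme) (j : ℝ → G)

noncomputable def block (ξ : ℝ) (s : List Bool) : G :=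
  (j (C.a s))⁻¹ * j (C.leftMap s ξ) * (j (C.rightMap s ξ))⁻¹ * j (C.b s)

theorem altProd_flatten_blockPoints (ξ : ℝ) (l : List (List Bool)) :
    altProd j false (l.map (C.blockPoints ξ)).flatten = (l.map (C.block j ξ)).prod := by
  induction l with
  | nil => rfl
  | cons s l ih => simp [blockPoints, block, altProd, ← ih, mul_assoc]

theorem z_eq_prod_block (n : ℕ) {ξ : ℝ} (hξ : ξ ≤ 1) :
    C.z j n ξ = ((binaryWords n).map (C.block j ξ)).prod := by
  rcases le_or_gt ξ 0 with h | h
  · rw [z, if_pos h, eq_comm]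
    refine List.prod_eq_one fun x hx => ?_
    obtain ⟨s, -, rfl⟩ := List.mem_map.mp hx
    rw [block, C.leftMap_of_nonpos s h, C.rightMap_of_nonpos s h]
    group
  · rw [z, if_neg h.not_ge, piMinus, C.sort_boundary n h hξ, boundaryList,
      altProd_flatten_blockPoints]

variable {C} (h0 : C.a [] = 0) (h1 : C.b [] = 1)
include h0 h1

theorem mem_unitInterval_of_mem_blockPoints {ξ : ℝ} (hξ : ξ ∈ Icc 0 1) {s : List Bool} {x : ℝ}
    (hx : x ∈ C.blockPoints ξ s) : x ∈ Icc (0:ℝ) 1 :=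
  Icc_subset_Icc (C.a_nonneg h0 s) (C.b_le_one h1 s) (mem_Icc_of_mem_blockPoints hξ hx)

theorem continuousOn_z [TopologicalSpace G] [IsTopologicalGroup G]
    (hj : ContinuousOn j (Icc 0 1)) (n : ℕ) : ContinuousOn (C.z j n) (Icc 0 1) := by
  refine (continuousOn_list_prod _ fun s _ => ?_).congr fun ξ hξ => C.z_eq_prod_block j n hξ.2
  have hpoint : ∀ {f : ℝ → ℝ}, ContinuousOn f (Icc 0 1) →
      (∀ ξ, f ξ ∈ C.blockPoints ξ s) → ContinuousOn (fun ξ => j (f ξ)) (Icc 0 1) :=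
    fun hf hmem => hj.comp hf fun ξ hξ => mem_unitInterval_of_mem_blockPoints h0 h1 hξ (hmem ξ)
  exact ((continuousOn_const.mul (hpoint (C.continuousOn_leftMap s) (by simp [blockPoints]))).mul
    (hpoint (C.continuousOn_rightMap s) (by simp [blockPoints])).inv).mul continuousOn_const

end

section

variable {G : Type*} [Group G] {C : CantorScheme} {j : ℝ → G} (h0 : C.a [] = 0) (h1 : C.b [] = 1)
  {H : G →* G} {f : ℝ → ℝ} (hH : ∀ x ∈ Icc (0:ℝ) 1, H (j x) = j (f x))
include h0 h1 hH

theorem map_block {ξ : ℝ} (hξ : ξ ∈ Icc 0 1) (s : List Bool) :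
    H (C.block j ξ s) = (j (f (C.a s)))⁻¹ * j (f (C.leftMap s ξ)) *
      (j (f (C.rightMap s ξ)))⁻¹ * j (f (C.b s)) := by
  have hpt : ∀ x ∈ C.blockPoints ξ s, H (j x) = j (f x) := fun x hx =>
    hH x (mem_unitInterval_of_mem_blockPoints h0 h1 hξ hx)
  simp only [blockPoints, List.mem_cons, List.not_mem_nil, or_false, forall_eq_or_imp,
    forall_eq] at hpt
  obtain ⟨ha, hl, hr, hb⟩ := hpt
  rw [block, map_mul, map_mul, map_mul, map_inv, map_inv, ha, hl, hr, hb]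

/-- Of the letters of `z_n ξ`, only `left_{0^n} ξ` lies strictly between `0 = min J_{0^n}` and
`min J_{0^n⌢1}`. -/
theorem map_z_eq (n : ℕ) (hf0 : f 0 = 0)
    (hfix : ∀ x, C.a (List.replicate n false ++ [true]) ≤ x → f x = x)
    {ξ : ℝ} (hξ : ξ ∈ Icc 0 1) :
    H (C.z j n ξ) = (j 0)⁻¹ * j (f (C.leftMap (List.replicate n false) ξ)) *
      (j (C.leftMap (List.replicate n false) ξ))⁻¹ * j 0 * C.z j n ξ := by
  obtain ⟨r, hr⟩ := binaryWords_eq_cons n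
  set s₀ := List.replicate n false
  have ha₀ : C.a s₀ = 0 := by
    simpa [h0] using C.a_append_replicate_false [] n
  have hD : C.a (s₀ ++ [true]) ≤ C.b s₀ := (C.lt3 s₀).le.trans (C.right_max s₀).le
  have hcross : ∀ t ∈ r, C.b s₀ < C.a t := by
    have := C.pairwise_b_lt_a_binaryWords n []
    rw [hr] at this
    simpa using (List.pairwise_cons.mp this).1
  have hrest : ∀ t ∈ r, H (C.block j ξ t) = C.block j ξ t := fun t ht => by
    have hfix' : ∀ x ∈ C.blockPoints ξ t, f x = x := fun x hx =>
      hfix x (hD.trans ((hcross t ht).le.trans (mem_Icc_of_mem_blockPoints hξ hx).1))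
    simp only [blockPoints, List.mem_cons, List.not_mem_nil, or_false, forall_eq_or_imp,
      forall_eq] at hfix'
    obtain ⟨ha, hl, hr, hb⟩ := hfix'
    rw [map_block h0 h1 hH hξ, block, ha, hl, hr, hb]
  have hhead : H (C.block j ξ s₀) = (j 0)⁻¹ * j (f (C.leftMap s₀ ξ)) *
      (j (C.rightMap s₀ ξ))⁻¹ * j (C.b s₀) := by
    rw [map_block h0 h1 hH hξ, ha₀, hf0, hfix _ (C.rightMap_mem_Icc s₀ hξ).1, hfix _ hD]
  have hrest' : H (r.map (C.block j ξ)).prod = (r.map (C.block j ξ)).prod := by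
    rw [map_list_prod, List.map_map]
    exact congrArg _ (List.map_congr_left hrest)
  rw [C.z_eq_prod_block j n hξ.2, hr, List.map_cons, List.prod_cons, map_mul, hhead, hrest', block,
    ha₀]
  group

end

section

variable {G : Type*} [Group G] [TopologicalSpace G] {C : CantorScheme} {j : ℝ → G}

theorem not_inseparable_z_of_lt [IsTopologicalGroup G] (hj : FunctorialEmbedding j)
    (h0 : C.a [] = 0) (h1 : C.b [] = 1) (n : ℕ) {ξ η : ℝ} (hξ : ξ ∈ Icc 0 1)
    (hη : η ∈ Icc 0 1) (hξη : ξ < η) : ¬ Inseparable (C.z j n ξ) (C.z j n η) := by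
  intro hins
  set s₀ := List.replicate n false
  set p := C.leftMap s₀ ξ
  set q := C.leftMap s₀ η
  set D := C.a (s₀ ++ [true])
  have hpq : p < q := C.strictMonoOn_leftMap s₀ hξ hη hξη
  have hp0 : 0 ≤ p := (C.a_nonneg h0 s₀).trans (C.leftMap_mem_Icc s₀ hξ).1
  have hqD : q < D := (C.leftMap_mem_Icc s₀ hη).2.trans_lt (C.lt2 s₀)
  have hD1 : D ≤ 1 := (C.a_lt_b _).le.trans (C.b_le_one h1 _)
  obtain ⟨h, hh⟩ := exists_homeomorph_unitInterval (continuous_bump p D).continuousOn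
    ((strictMono_bump p D).strictMonoOn _) (bump_of_le hp0) (bump_of_ge hD1)
  obtain ⟨H, hHc, hHj⟩ := hj.2 h
  have hH : ∀ x ∈ Icc (0:ℝ) 1, H (j x) = j (bump p D x) := fun x hx =>
    (hHj ⟨x, hx⟩).trans (congrArg j (hh ⟨x, hx⟩))
  have hfix : ∀ x, D ≤ x → bump p D x = x := fun x => bump_of_ge
  have hzξ : H (C.z j n ξ) = (j 0)⁻¹ * j (bump p D p) * (j p)⁻¹ * j 0 * C.z j n ξ :=
    map_z_eq h0 h1 hH n (bump_of_le hp0) hfix hξ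
  have hzη : H (C.z j n η) = (j 0)⁻¹ * j (bump p D q) * (j q)⁻¹ * j 0 * C.z j n η :=
    map_z_eq h0 h1 hH n (bump_of_le hp0) hfix hη
  rw [bump_of_le le_rfl, mul_inv_cancel_right, inv_mul_cancel, one_mul] at hzξ
  have hmoved : Inseparable (H (C.z j n η)) (C.z j n η) :=
    (hzξ ▸ (hins.map hHc).symm).trans hins
  rw [hzη] at hmoved
  have hq : Inseparable (j (bump p D q)) (j q) := by
    convert hmoved.map ((continuous_const.mul continuous_id).mul continuous_const) (f := fun g =>
      j 0 * g * ((C.z j n η)⁻¹ * (j 0)⁻¹ * j q)) using 1 <;> group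
  have hqI : q ∈ Icc (0:ℝ) 1 := ⟨hp0.trans hpq.le, hqD.le.trans hD1⟩
  exact (lt_bump hpq hqD).ne'
    (hj.1.eq_of_inseparable_domRestrict (hh ⟨q, hqI⟩ ▸ (h ⟨q, hqI⟩).2) hqI hq)

end

end CantorScheme

/-- If `j : [0,1] → G` is a functorial embedding and `ℐ` a usual Cantor scheme with
`J_∅ = [0,1]`, then each map `z_n : [0,1] → G` is a topological embedding. -/
theorem stmt6 {G : Type*} [Group G] [TopologicalSpace G] [IsTopologicalGroup G]
    (j : ℝ → G) (hj : FunctorialEmbedding j)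
    (C : CantorScheme) (h0 : C.a [] = 0) (h1 : C.b [] = 1) (n : ℕ) :
    Topology.IsEmbedding ((Set.Icc (0:ℝ) 1).restrict (C.z j n)) := by
  have hcont := CantorScheme.continuousOn_z j h0 h1
    (continuousOn_iff_continuous_domRestrict.mpr hj.1.continuous) n
  refine IsEmbedding.of_continuous_of_inseparable
    (continuousOn_iff_continuous_domRestrict.mp hcont) fun ξ η hins => ?_
  by_contra hne
  rcases lt_or_gt_of_ne (Subtype.coe_ne_coe.mpr hne) with h | h
  · exact CantorScheme.not_inseparable_z_of_lt hj h0 h1 n ξ.2 η.2 h hins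
  · exact CantorScheme.not_inseparable_z_of_lt hj h0 h1 n η.2 ξ.2 h hins.symm
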